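/- Let $F_u(q) = \sum_{i=1}^k \min_{j \in [k]} |q_i - p_{u,j}|$. Then $F_u(p_u) = 0$, and if $q \in \mathcal{A}_0$ (i.e., the entries of $q$ intersect at least $9k/10$ of the disjoint intervals $I_1, \ldots, I_k$ around the entries of $p_0$) and $u \neq u'$ have Hamming distance at least $k_0/5$, then $F_u(q) + F_{u'}(q) \ge k\delta/5$. -/

import Mathlib

/-!
Write `F_u(q) = ∑ i, nearestDist p_u (q i)`. The centres `p0 i` are `2r`-separated, with
`r = 1/(2k(k-1))`, and `p_u`, `p_{u'}` stay within `δ ≤ r/2` of them. Let `x` lie in the `r`-ball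
of a centre `m` at which `p_u` and `p_{u'}` are `2δ` apart. If both nearest points of `x` have
index `m`, the triangle inequality gives distance sum `≥ 2δ`; otherwise one of them lies near
another centre and the sum is `≥ 2r - 2δ ≥ 2δ`. Each of the `≥ k/10` coordinates where `u ≠ u'`
yields two such centres; `q ∈ 𝒜₀` misses at most `k/10` balls, and as the balls are disjoint,
distinct hit balls are hit by distinct entries of `q`. So `k/10` entries contribute `2δ` each.
-/

open Finset Metric

noncomputable def nearestDist {ι α : Type*} [Fintype ι] [Nonempty ι] [PseudoMetricSpace α]
    (v : ι → α) (x : α) : ℝ :=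
  univ.inf' univ_nonempty fun j => dist x (v j)

section NearestDist

variable {ι α : Type*} [Fintype ι] [Nonempty ι] [PseudoMetricSpace α]

lemma nearestDist_nonneg (v : ι → α) (x : α) : 0 ≤ nearestDist v x :=
  le_inf' _ _ fun _ _ => dist_nonneg

lemma nearestDist_apply_self (v : ι → α) (i : ι) : nearestDist v (v i) = 0 :=
  le_antisymm ((inf'_le _ (mem_univ i)).trans_eq (dist_self _)) (nearestDist_nonneg v _)

lemma exists_nearestDist_eq (v : ι → α) (x : α) : ∃ j, nearestDist v x = dist x (v j) := by
  obtain ⟨j, -, hj⟩ := exists_mem_eq_inf' univ_nonempty fun j => dist x (v j)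
  exact ⟨j, hj⟩

lemma inf'_abs_sub_eq_nearestDist (v : ι → ℝ) (x : ℝ) (H : (univ : Finset ι).Nonempty) :
    univ.inf' H (fun j => |x - v j|) = nearestDist v x :=
  rfl

lemma two_mul_le_nearestDist_add_nearestDist {c v v' : ι → α} {δ r : ℝ} (hδr : 2 * δ ≤ r)
    (hc : Pairwise fun i j => 2 * r ≤ dist (c i) (c j))
    (hv : ∀ j, dist (v j) (c j) ≤ δ) (hv' : ∀ j, dist (v' j) (c j) ≤ δ)
    {m : ι} (hm : 2 * δ ≤ dist (v m) (v' m)) {x : α} (hx : x ∈ ball (c m) r) :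
    2 * δ ≤ nearestDist v x + nearestDist v' x := by
  rw [mem_ball] at hx
  have near : ∀ w : ι → α, (∀ j, dist (w j) (c j) ≤ δ) → dist x (c m) - δ ≤ dist x (w m) :=
    fun w hw => by linarith [dist_triangle x (w m) (c m), hw m]
  have far : ∀ w : ι → α, (∀ j, dist (w j) (c j) ≤ δ) →
      ∀ j ≠ m, 2 * r - dist x (c m) - δ ≤ dist x (w j) := fun w hw j hj => by
    linarith [hc hj, dist_triangle4 (c j) (w j) x (c m), hw j, dist_comm (c j) (w j),
      dist_comm (w j) x]
  obtain ⟨j, hj⟩ := exists_nearestDist_eq v x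
  obtain ⟨j', hj'⟩ := exists_nearestDist_eq v' x
  rw [hj, hj']
  by_cases hjm : j = m <;> by_cases hjm' : j' = m
  · rw [hjm, hjm']
    linarith [dist_triangle_left (v m) (v' m) x]
  · rw [hjm]
    linarith [near v hv, far v' hv' j' hjm']
  · rw [hjm']
    linarith [far v hv j hjm, near v' hv']
  · linarith [far v hv j hjm, far v' hv' j' hjm']

end NearestDist

lemma card_filter_mul_le_sum {ι κ α : Type*} [Fintype ι] [PseudoMetricSpace α] {q : ι → α}
    {c : κ → α} {r a : ℝ} (hc : Pairwise fun m n => 2 * r ≤ dist (c m) (c n)) {g : ι → ℝ}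
    (hg : ∀ i, 0 ≤ g i) {D : Finset κ} [DecidablePred fun m => ∃ i, q i ∈ ball (c m) r]
    (hgD : ∀ m ∈ D, ∀ i, q i ∈ ball (c m) r → a ≤ g i) :
    #(D.filter fun m => ∃ i, q i ∈ ball (c m) r) * a ≤ ∑ i, g i := by
  rcases isEmpty_or_nonempty ι with _ | _
  · simp
  classical
  set E := D.filter fun m => ∃ i, q i ∈ ball (c m) r
  choose! w hw using fun m (hm : m ∈ E) => (mem_filter.mp hm).2
  have hinj : Set.InjOn w E := by
    intro m hm n hn hmn
    by_contra hne
    have hqm := mem_ball.mp (hw m hm)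
    rw [hmn] at hqm
    linarith [hc hne, dist_triangle_left (c m) (c n) (q (w n)), mem_ball.mp (hw n hn)]
  calc (#E : ℝ) * a = ∑ m ∈ E, a := by simp
    _ ≤ ∑ m ∈ E, g (w m) := sum_le_sum fun m hm => hgD m (mem_filter.mp hm).1 _ (hw m hm)
    _ = ∑ i ∈ E.image w, g i := (sum_image hinj).symm
    _ ≤ ∑ i, g i := sum_le_sum_of_subset_of_nonneg (subset_univ _) fun i _ _ => hg i

lemma card_le_card_filter_add_card_filter_not {α : Type*} [Fintype α] (s : Finset α) (p : α → Prop)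
    [DecidablePred p] : #s ≤ #(s.filter p) + #(univ.filter fun a => ¬p a) := by
  rw [← card_filter_add_card_filter_not (s := s) p]
  gcongr
  exact subset_univ s

lemma card_sub_card_filter_mul_le_sum {ι κ α : Type*} [Fintype ι] [Fintype κ]
    [PseudoMetricSpace α] {q : ι → α} {c : κ → α} {r a : ℝ}
    (hc : Pairwise fun m n => 2 * r ≤ dist (c m) (c n)) {g : ι → ℝ} (hg : ∀ i, 0 ≤ g i)
    {D : Finset κ} [DecidablePred fun m => ∀ i, q i ∉ ball (c m) r] (ha : 0 ≤ a)
    (hgD : ∀ m ∈ D, ∀ i, q i ∈ ball (c m) r → a ≤ g i) :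
    (#D - #(univ.filter fun m => ∀ i, q i ∉ ball (c m) r) : ℝ) * a ≤ ∑ i, g i := by
  classical
  refine le_trans (mul_le_mul_of_nonneg_right ?_ ha) (card_filter_mul_le_sum hc hg hgD)
  have := card_le_card_filter_add_card_filter_not D fun m => ∃ i, q i ∈ ball (c m) r
  simp only [not_exists] at this
  rw [sub_le_iff_le_add]
  exact_mod_cast this

lemma one_div_le_dist_of_forall_eq_add_div {n : ℕ} {p : Fin n → ℝ} {a d : ℝ} (hd : 0 < d)
    (hp : ∀ i : Fin n, p i = a + i / d) : Pairwise fun i j => 1 / d ≤ dist (p i) (p j) := by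
  intro i j hij
  have hij' : (1 : ℝ) ≤ |(i : ℝ) - j| := by
    have : ((i : ℕ) : ℤ) ≠ j := by exact_mod_cast Fin.val_ne_of_ne hij
    exact_mod_cast Int.one_le_abs (sub_ne_zero.mpr this)
  rw [Real.dist_eq, hp, hp, add_sub_add_left_eq_sub, ← sub_div, abs_div, abs_of_pos hd]
  gcongr

section Halves

variable {k : ℕ}

def finLow (i : Fin k) : Fin (2 * k) :=
  ⟨i, by omega⟩

def finHigh (i : Fin k) : Fin (2 * k) :=
  ⟨k + i, by rw [two_mul]; exact Nat.add_lt_add_left i.isLt k⟩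

lemma finLow_injective : Function.Injective (finLow (k := k)) :=
  fun i j h => Fin.ext (by simpa [finLow] using h)

lemma finHigh_injective : Function.Injective (finHigh (k := k)) :=
  fun i j h => Fin.ext (by simpa [finHigh] using h)

lemma finLow_ne_finHigh (i j : Fin k) : finLow i ≠ finHigh j := by
  simp only [finLow, finHigh, ne_eq, Fin.ext_iff]
  omega

lemma forall_fin_two_mul {P : Fin (2 * k) → Prop} (hlow : ∀ i, P (finLow i))
    (hhigh : ∀ i, P (finHigh i)) (j : Fin (2 * k)) : P j := by
  obtain ⟨j, hj⟩ := j
  by_cases hjk : j < k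
  · exact hlow ⟨j, hjk⟩
  · simpa [finHigh, Nat.add_sub_cancel' (not_lt.mp hjk)] using hhigh ⟨j - k, by omega⟩

end Halves

lemma abs_mul_eq_of_sign {s δ : ℝ} (hs : s = 1 ∨ s = -1) (hδ : 0 ≤ δ) : |s * δ| = δ := by
  rcases hs with rfl | rfl <;> simp [abs_of_nonneg hδ]

lemma abs_sub_mul_eq_of_sign {s s' δ : ℝ} (hs : s = 1 ∨ s = -1) (hs' : s' = 1 ∨ s' = -1)
    (hss' : s ≠ s') (hδ : 0 ≤ δ) : |s * δ - s' * δ| = 2 * δ := by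
  rw [← sub_mul, abs_mul, abs_of_nonneg hδ]
  rcases hs with rfl | rfl <;> rcases hs' with rfl | rfl <;>
    first | exact absurd rfl hss' | norm_num

def IsSignPerturbation {k : ℕ} (p0 pu : Fin (2 * k) → ℝ) (u : Fin k → ℝ) (δ : ℝ) : Prop :=
  (∀ i, pu (finLow i) = p0 (finLow i) + u i * δ) ∧
    ∀ i, pu (finHigh i) = p0 (finHigh i) - u i * δ

section Perturbation

variable {k : ℕ} {p0 pu pu' : Fin (2 * k) → ℝ} {u u' : Fin k → ℝ} {δ : ℝ}

lemma IsSignPerturbation.dist_le (h : IsSignPerturbation p0 pu u δ) (hu : ∀ i, u i = 1 ∨ u i = -1)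
    (hδ : 0 ≤ δ) : ∀ j, dist (pu j) (p0 j) ≤ δ :=
  forall_fin_two_mul
    (fun i => by rw [Real.dist_eq, h.1, add_sub_cancel_left, abs_mul_eq_of_sign (hu i) hδ])
    (fun i => by rw [Real.dist_eq, h.2, sub_sub_cancel_left, abs_neg, abs_mul_eq_of_sign (hu i) hδ])

lemma IsSignPerturbation.two_mul_card_ne_le (h : IsSignPerturbation p0 pu u δ)
    (h' : IsSignPerturbation p0 pu' u' δ) (hu : ∀ i, u i = 1 ∨ u i = -1)
    (hu' : ∀ i, u' i = 1 ∨ u' i = -1) (hδ : 0 ≤ δ) :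
    2 * #(univ.filter fun i => u i ≠ u' i) ≤
      #(univ.filter fun j => 2 * δ ≤ dist (pu j) (pu' j)) := by
  classical
  set Δ := univ.filter fun i => u i ≠ u' i
  have hdisj : Disjoint (Δ.image finLow) (Δ.image finHigh) := by
    simp only [disjoint_left, mem_image]
    rintro _ ⟨i, -, rfl⟩ ⟨j, -, hj⟩
    exact finLow_ne_finHigh i j hj.symm
  calc 2 * #Δ = #(Δ.image finLow ∪ Δ.image finHigh) := by
        rw [card_union_of_disjoint hdisj, card_image_of_injective _ finLow_injective,
          card_image_of_injective _ finHigh_injective, two_mul]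
    _ ≤ _ := by
      refine card_le_card fun j hj => mem_filter.mpr ⟨mem_univ j, ?_⟩
      rcases mem_union.mp hj with hj | hj <;> obtain ⟨i, hi, rfl⟩ := mem_image.mp hj
      · rw [Real.dist_eq, h.1, h'.1, add_sub_add_left_eq_sub,
          abs_sub_mul_eq_of_sign (hu i) (hu' i) (mem_filter.mp hi).2 hδ]
      · rw [Real.dist_eq, h.2, h'.2, sub_sub_sub_cancel_left,
          abs_sub_mul_eq_of_sign (hu' i) (hu i) (Ne.symm (mem_filter.mp hi).2) hδ]

end Perturbation

/-- Separation condition for the generalized Fano inequality: `F_u(p_u) = 0`, and for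
`q ∈ 𝒜₀` and `u ≠ u'` of Hamming distance at least `k0/5`, `F_u(q) + F_{u'}(q) ≥ kδ/5`. -/
theorem paninski_separation (k0 : ℕ) (hk0 : 0 < k0)
    (p0 pu pu' q : Fin (2 * k0) → ℝ) (δ : ℝ)
    (hp0 : ∀ i : Fin (2 * k0),
      p0 i = 1 / (2 * (2 * k0 : ℝ)) + (i : ℝ) / ((2 * k0 : ℝ) * ((2 * k0 : ℝ) - 1)))
    (hδ0 : 0 < δ) (hδ : δ < 1 / (4 * (2 * k0 : ℝ) * ((2 * k0 : ℝ) - 1)))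
    (u u' : Fin k0 → ℝ)
    (hu : ∀ i, u i = 1 ∨ u i = -1) (hu' : ∀ i, u' i = 1 ∨ u' i = -1)
    (hpu1 : ∀ i : Fin k0, pu ⟨(i : ℕ), by omega⟩ = p0 ⟨(i : ℕ), by omega⟩ + u i * δ)
    (hpu2 : ∀ i : Fin k0, pu ⟨k0 + (i : ℕ), by omega⟩ = p0 ⟨k0 + (i : ℕ), by omega⟩ - u i * δ)
    (hpu'1 : ∀ i : Fin k0, pu' ⟨(i : ℕ), by omega⟩ = p0 ⟨(i : ℕ), by omega⟩ + u' i * δ)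
    (hpu'2 : ∀ i : Fin k0, pu' ⟨k0 + (i : ℕ), by omega⟩ = p0 ⟨k0 + (i : ℕ), by omega⟩ - u' i * δ)
    (hham : (k0 : ℝ) / 5 ≤ ((Finset.univ.filter fun i => u i ≠ u' i).card : ℝ))
    (hA0 : ((Finset.univ.filter fun i : Fin (2 * k0) => ∀ j : Fin (2 * k0),
        q j ∉ Set.Ioo (p0 i - 1 / (2 * (2 * k0 : ℝ) * ((2 * k0 : ℝ) - 1)))
                      (p0 i + 1 / (2 * (2 * k0 : ℝ) * ((2 * k0 : ℝ) - 1)))).card : ℝ)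
      ≤ (2 * k0 : ℝ) / 10) :
    (∑ i, Finset.univ.inf' (Finset.univ_nonempty_iff.mpr (Fin.pos_iff_nonempty.mp (by omega)))
        (fun j : Fin (2 * k0) => |pu i - pu j|) = 0) ∧
    (2 * k0 : ℝ) * δ / 5 ≤
      (∑ i, Finset.univ.inf' (Finset.univ_nonempty_iff.mpr (Fin.pos_iff_nonempty.mp (by omega)))
        (fun j : Fin (2 * k0) => |q i - pu j|)) +
      (∑ i, Finset.univ.inf' (Finset.univ_nonempty_iff.mpr (Fin.pos_iff_nonempty.mp (by omega)))
        (fun j : Fin (2 * k0) => |q i - pu' j|)) := by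
  classical
  have : NeZero (2 * k0) := ⟨by omega⟩
  simp only [inf'_abs_sub_eq_nearestDist, ← sum_add_distrib]
  refine ⟨sum_eq_zero fun i _ => nearestDist_apply_self pu i, ?_⟩
  set r := 1 / (2 * (2 * k0 : ℝ) * ((2 * k0 : ℝ) - 1))
  have hK : (2 : ℝ) ≤ 2 * k0 := by norm_cast; omega
  have hδr : 2 * δ ≤ r := by
    rw [show 4 * (2 * k0 : ℝ) * (2 * k0 - 1) = 2 * (2 * k0) * (2 * k0 - 1) * 2 by ring,
      ← div_div] at hδ
    linarith
  have hsep : Pairwise fun i j => 2 * r ≤ dist (p0 i) (p0 j) := by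
    have h2r : 2 * r = 1 / ((2 * k0 : ℝ) * (2 * k0 - 1)) := by simp only [r]; field_simp
    simpa only [h2r] using one_div_le_dist_of_forall_eq_add_div (by nlinarith) hp0
  have hP : IsSignPerturbation p0 pu u δ := ⟨hpu1, hpu2⟩
  have hP' : IsSignPerturbation p0 pu' u' δ := ⟨hpu'1, hpu'2⟩
  have hsum := card_sub_card_filter_mul_le_sum hsep (q := q)
    (D := univ.filter fun j => 2 * δ ≤ dist (pu j) (pu' j))
    (fun i => add_nonneg (nearestDist_nonneg pu (q i)) (nearestDist_nonneg pu' (q i)))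
    (by positivity) fun m hm i hi =>
      two_mul_le_nearestDist_add_nearestDist hδr hsep (hP.dist_le hu hδ0.le)
        (hP'.dist_le hu' hδ0.le) (mem_filter.mp hm).2 hi
  have hD : (2 * k0 : ℝ) / 5 ≤ #(univ.filter fun j => 2 * δ ≤ dist (pu j) (pu' j)) := by
    have := (Nat.cast_le (α := ℝ)).mpr (hP.two_mul_card_ne_le hP' hu hu' hδ0.le)
    push_cast at this
    linarith
  simp only [← Real.ball_eq_Ioo] at hA0
  nlinarith
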